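/- If A and B are microCCS processes in normal form with respect to the distribution-law rewriting, then A ∼ B implies A ≡ B. Moreover, every prefixed process in normal form is prime. -/

import Mathlib

/-- CCS visible actions: a name `a` or a coname `ā`. -/
inductive Act where
  | inp : ℕ → Act
  | out : ℕ → Act
deriving DecidableEq

/-- The coaction. -/
def Act.co : Act → Act
  | .inp a => .out a
  | .out a => .inp a

/-- MicroCCS processes: nil, prefix, parallel composition. -/
inductive Proc where
  | nil : Proc
  | pre : Act → Proc → Proc
  | par : Proc → Proc → Proc
deriving DecidableEq

/-- Transition labels: a visible action or τ. -/
inductive Lab where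
  | act : Act → Lab
  | tau : Lab
deriving DecidableEq

/-- The standard CCS labelled transition system on microCCS. -/
inductive Step : Proc → Lab → Proc → Prop where
  | pre (η : Act) (P : Proc) : Step (.pre η P) (.act η) P
  | syn {P P' Q Q' : Proc} {η : Act} :
      Step P (.act η) P' → Step Q (.act η.co) Q' →
      Step (.par P Q) .tau (.par P' Q')
  | parL {P P' : Proc} {μ : Lab} (Q : Proc) :
      Step P μ P' → Step (.par P Q) μ (.par P' Q)
  | parR {Q Q' : Proc} {μ : Lab} (P : Proc) :
      Step Q μ Q' → Step (.par P Q) μ (.par P Q')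

/-- A (symmetric) bisimulation. -/
def IsBisim (R : Proc → Proc → Prop) : Prop :=
  (∀ P Q, R P Q → R Q P) ∧
  ∀ P Q μ P', R P Q → Step P μ P' → ∃ Q', Step Q μ Q' ∧ R P' Q'

/-- Strong bisimilarity: the union of all bisimulations. -/
def Bisim (P Q : Proc) : Prop := ∃ R, IsBisim R ∧ R P Q

/-- The size of a process: its number of prefixes. -/
def Proc.size : Proc → ℕ
  | .nil => 0
  | .pre _ P => 1 + P.size
  | .par P Q => P.size + Q.size

/-- Structural congruence: abelian monoid laws for parallel composition. -/
inductive SC : Proc → Proc → Prop where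
  | refl (P) : SC P P
  | symm : SC P Q → SC Q P
  | trans : SC P Q → SC Q R → SC P R
  | comm (P Q) : SC (.par P Q) (.par Q P)
  | assoc (P Q R) : SC (.par P (.par Q R)) (.par (.par P Q) R)
  | unit (P) : SC (.par P .nil) P
  | pre (η) : SC P Q → SC (.pre η P) (.pre η Q)
  | par : SC P P' → SC Q Q' → SC (.par P Q) (.par P' Q')

/-- `pow P k` is the k-fold parallel composition of `P`. -/
def pow (P : Proc) : ℕ → Proc
  | 0 => .nil
  | n+1 => .par P (pow P n)

/-- One step of rewriting with the distribution law
    `η.(P ‖ (η.P)^k) ⇝ (η.P)^{k+1}` (k ≥ 1), modulo structural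
    congruence, in any context. -/
inductive RW : Proc → Proc → Prop where
  | head {η : Act} {P : Proc} {k : ℕ} (hk : 1 ≤ k) :
      RW (.pre η (.par P (pow (.pre η P) k))) (pow (.pre η P) (k+1))
  | pre (η) : RW P P' → RW (.pre η P) (.pre η P')
  | parL (Q) : RW P P' → RW (.par P Q) (.par P' Q)
  | parR (P) : RW Q Q' → RW (.par P Q) (.par P Q')
  | congr : SC P P₁ → RW P₁ P₂ → SC P₂ P' → RW P P'

/-- Reflexive-transitive closure of the distribution rewriting. -/
def Rws : Proc → Proc → Prop := Relation.ReflTransGen RW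

/-- Normal forms for the distribution rewriting. -/
def NF (P : Proc) : Prop := ¬ ∃ P', RW P P'

/-- Prime processes. -/
def IsPrime (P : Proc) : Prop :=
  ¬ Bisim P .nil ∧ ∀ Q R, Bisim P (.par Q R) → Bisim Q .nil ∨ Bisim R .nil

/-!
Every process is structurally congruent to the parallel composition of its prefixed components,
so `≡` is equality of component multisets. Both claims are proved together by induction on size.

If `A ∼ B` are normal forms, fire in `A` a component `κ = a.C` of maximal size among the
components of `A` and `B`. The matching transition of `B` fires some `a.D`, and the residuals are
smaller normal forms, hence congruent by induction. Bodies of components are too small to contain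
`κ`, so counting occurrences of `κ` either identifies `a.D` with `κ`, and then `A ≡ B`, or shows
that `B` has one `κ` fewer than `A`. Firing a component of `A` other than `κ` gives the opposite
inequality; if there is none, `κ` occurs in `B` (by primality when `A` is `κ` alone) and firing it
there identifies its match.

If a normal form `η.A` is bisimilar to a normal form with `m ≥ 2` components, firing each of them
leaves a residual congruent to `A`; the same count shows that all components are some `η.C`, so
`A ≡ C ‖ (η.C)^(m-1)`, a distribution redex. Arbitrary `Q ‖ R` are first replaced by bisimilar
normal forms, which exist since rewriting terminates and preserves `∼`.
-/

theorem Act.co_ne (a : Act) : a.co ≠ a := by cases a <;> simp [Act.co]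

theorem Act.co_co (a : Act) : a.co.co = a := by cases a <;> rfl

theorem SC.par_left_comm (P Q R : Proc) : SC (.par P (.par Q R)) (.par Q (.par P R)) :=
  (SC.assoc _ _ _).trans ((SC.par (SC.comm _ _) (.refl _)).trans (SC.assoc _ _ _).symm)

theorem SC.size_eq {P Q : Proc} (h : SC P Q) : P.size = Q.size := by
  induction h <;> (try simp only [Proc.size] at *) <;> omega

namespace Step

theorem not_nil {μ : Lab} {P : Proc} : ¬ Step .nil μ P := nofun

theorem pre_inv {η : Act} {P P' : Proc} {μ : Lab} (h : Step (.pre η P) μ P') :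
    μ = .act η ∧ P' = P := by
  cases h; exact ⟨rfl, rfl⟩

theorem size_eq {P P' : Proc} {a : Act} (h : Step P (.act a) P') : P.size = P'.size + 1 := by
  generalize hμ : Lab.act a = μ at h
  induction h generalizing a with
  | pre => cases hμ; simp only [Proc.size]; omega
  | syn => cases hμ
  | parL _ _ ih => simp only [Proc.size, ih hμ]; omega
  | parR _ _ ih => simp only [Proc.size, ih hμ]; omega

theorem exists_of_size_pos : ∀ {P : Proc}, 0 < P.size → ∃ a P', Step P (.act a) P'
  | .nil, h => absurd h (lt_irrefl 0)
  | .pre a P, _ => ⟨a, P, .pre a P⟩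
  | .par P Q, h => by
    by_cases hP : 0 < P.size
    · obtain ⟨a, P', hs⟩ := exists_of_size_pos hP
      exact ⟨a, _, .parL Q hs⟩
    · obtain ⟨a, Q', hs⟩ := exists_of_size_pos (P := Q) (by simp only [Proc.size] at h; omega)
      exact ⟨a, _, .parR P hs⟩

theorem decompose {P P' : Proc} {a : Act} (h : Step P (.act a) P') :
    ∃ D Y, SC P (.par (.pre a D) Y) ∧ SC P' (.par D Y) := by
  generalize hμ : Lab.act a = μ at h
  induction h generalizing a with
  | pre η P => cases hμ; exact ⟨P, .nil, (SC.unit _).symm, (SC.unit _).symm⟩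
  | syn => cases hμ
  | parL Q _ ih =>
    obtain ⟨D, Y, h, h'⟩ := ih hμ
    exact ⟨D, .par Y Q, (h.par (.refl Q)).trans (SC.assoc _ _ _).symm,
      (h'.par (.refl Q)).trans (SC.assoc _ _ _).symm⟩
  | parR P _ ih =>
    obtain ⟨D, Y, h, h'⟩ := ih hμ
    exact ⟨D, .par P Y, ((SC.refl P).par h).trans (SC.par_left_comm _ _ _),
      ((SC.refl P).par h').trans (SC.par_left_comm _ _ _)⟩

theorem of_pow {η : Act} {P T : Proc} {j : ℕ} {μ : Lab} (h : Step (pow (.pre η P) j) μ T) :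
    μ = .act η ∧ ∃ i, j = i + 1 ∧ SC T (.par P (pow (.pre η P) i)) := by
  induction j generalizing μ T with
  | zero => exact absurd h not_nil
  | succ j ih =>
    cases h with
    | parL _ h =>
      obtain ⟨rfl, rfl⟩ := h.pre_inv
      exact ⟨rfl, j, rfl, .refl _⟩
    | parR _ h =>
      obtain ⟨rfl, i, rfl, hT⟩ := ih h
      exact ⟨rfl, i + 1, rfl, ((SC.refl _).par hT).trans (SC.par_left_comm _ _ _)⟩
    | syn h₁ h₂ =>
      obtain ⟨⟨⟩, -⟩ := h₁.pre_inv
      obtain ⟨h, -⟩ := ih h₂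
      exact absurd (Lab.act.inj h) (Act.co_ne _)

end Step

namespace Bisim

theorem symm {P Q : Proc} (h : Bisim P Q) : Bisim Q P :=
  let ⟨R, hR, h⟩ := h
  ⟨R, hR, hR.1 _ _ h⟩

theorem step {P Q P' : Proc} {μ : Lab} (h : Bisim P Q) (hs : Step P μ P') :
    ∃ Q', Step Q μ Q' ∧ Bisim P' Q' := by
  obtain ⟨R, hR, h⟩ := h
  obtain ⟨Q', hs', h'⟩ := hR.2 _ _ _ _ h hs
  exact ⟨Q', hs', R, hR, h'⟩

theorem coinduct (R : Proc → Proc → Prop) (symm : ∀ {P Q}, R P Q → R Q P)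
    (progress : ∀ {P Q P' μ}, R P Q → Step P μ P' →
      ∃ Q', Step Q μ Q' ∧ (R P' Q' ∨ Bisim P' Q'))
    {P Q : Proc} (h : R P Q) : Bisim P Q := by
  refine ⟨fun X Y => R X Y ∨ Bisim X Y, ⟨?_, ?_⟩, .inl h⟩
  · rintro X Y (h | h)
    exacts [.inl (symm h), .inr h.symm]
  · rintro X Y μ X' (h | h) hs
    · exact progress h hs
    · obtain ⟨Y', hs', h'⟩ := h.step hs
      exact ⟨Y', hs', .inr h'⟩

protected theorem refl (P : Proc) : Bisim P P :=
  coinduct Eq (fun h => h.symm) (fun h hs => ⟨_, h ▸ hs, .inl rfl⟩) rfl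

protected theorem trans {P Q R : Proc} (h₁ : Bisim P Q) (h₂ : Bisim Q R) : Bisim P R :=
  coinduct (Relation.Comp Bisim Bisim) (fun ⟨M, h₁, h₂⟩ => ⟨M, h₂.symm, h₁.symm⟩)
    (fun ⟨_, h₁, h₂⟩ hs =>
      let ⟨M', hs₁, h₁'⟩ := h₁.step hs
      let ⟨Y', hs₂, h₂'⟩ := h₂.step hs₁
      ⟨Y', hs₂, .inl ⟨M', h₁', h₂'⟩⟩) ⟨Q, h₁, h₂⟩

theorem par {P P' Q Q' : Proc} (hP : Bisim P P') (hQ : Bisim Q Q') :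
    Bisim (.par P Q) (.par P' Q') := by
  refine coinduct (fun X Y => ∃ P P' Q Q', X = .par P Q ∧ Y = .par P' Q' ∧ Bisim P P' ∧ Bisim Q Q')
    ?_ ?_ ⟨P, P', Q, Q', rfl, rfl, hP, hQ⟩
  · rintro _ _ ⟨P, P', Q, Q', rfl, rfl, hP, hQ⟩
    exact ⟨P', P, Q', Q, rfl, rfl, hP.symm, hQ.symm⟩
  · rintro _ _ _ _ ⟨P, P', Q, Q', rfl, rfl, hP, hQ⟩ hs
    cases hs with
    | parL _ hs =>
      obtain ⟨_, hs', hP⟩ := hP.step hs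
      exact ⟨_, .parL _ hs', .inl ⟨_, _, _, _, rfl, rfl, hP, hQ⟩⟩
    | parR _ hs =>
      obtain ⟨_, hs', hQ⟩ := hQ.step hs
      exact ⟨_, .parR _ hs', .inl ⟨_, _, _, _, rfl, rfl, hP, hQ⟩⟩
    | syn hs₁ hs₂ =>
      obtain ⟨_, hs₁', hP⟩ := hP.step hs₁
      obtain ⟨_, hs₂', hQ⟩ := hQ.step hs₂
      exact ⟨_, .syn hs₁' hs₂', .inl ⟨_, _, _, _, rfl, rfl, hP, hQ⟩⟩

theorem pre (η : Act) {P Q : Proc} (h : Bisim P Q) : Bisim (.pre η P) (.pre η Q) := by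
  refine coinduct (fun X Y => ∃ P Q, X = .pre η P ∧ Y = .pre η Q ∧ Bisim P Q) ?_ ?_
    ⟨P, Q, rfl, rfl, h⟩
  · rintro _ _ ⟨P, Q, rfl, rfl, h⟩
    exact ⟨Q, P, rfl, rfl, h.symm⟩
  · rintro _ _ _ _ ⟨P, Q, rfl, rfl, h⟩ hs
    obtain ⟨rfl, rfl⟩ := hs.pre_inv
    exact ⟨Q, .pre η Q, .inr h⟩

theorem pre_inv {a b : Act} {C D : Proc} (h : Bisim (.pre a C) (.pre b D)) :
    a = b ∧ Bisim C D := by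
  obtain ⟨_, hs, h'⟩ := h.step (.pre a C)
  obtain ⟨⟨⟩, rfl⟩ := hs.pre_inv
  exact ⟨rfl, h'⟩

theorem size_le {P Q : Proc} (h : Bisim P Q) : P.size ≤ Q.size := by
  induction hP : P.size generalizing P Q with
  | zero => exact Nat.zero_le _
  | succ k ih =>
    obtain ⟨a, P', hs⟩ := Step.exists_of_size_pos (P := P) (by omega)
    obtain ⟨Q', hs', h'⟩ := h.step hs
    have := ih h' (by have := hs.size_eq; omega)
    have := hs'.size_eq
    omega

theorem size_eq {P Q : Proc} (h : Bisim P Q) : P.size = Q.size :=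
  le_antisymm h.size_le h.symm.size_le

theorem par_comm (P Q : Proc) : Bisim (.par P Q) (.par Q P) := by
  refine coinduct (fun X Y => ∃ P Q, X = .par P Q ∧ Y = .par Q P) ?_ ?_ ⟨P, Q, rfl, rfl⟩
  · rintro _ _ ⟨P, Q, rfl, rfl⟩
    exact ⟨Q, P, rfl, rfl⟩
  · rintro _ _ _ _ ⟨P, Q, rfl, rfl⟩ hs
    cases hs with
    | parL _ hs => exact ⟨_, .parR _ hs, .inl ⟨_, _, rfl, rfl⟩⟩
    | parR _ hs => exact ⟨_, .parL _ hs, .inl ⟨_, _, rfl, rfl⟩⟩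
    | syn hs₁ hs₂ => exact ⟨_, .syn hs₂ ((Act.co_co _).symm ▸ hs₁), .inl ⟨_, _, rfl, rfl⟩⟩

theorem par_assoc (P Q R : Proc) : Bisim (.par P (.par Q R)) (.par (.par P Q) R) := by
  let Assoc : Proc → Proc → Prop := fun X Y =>
    ∃ P Q R, X = .par P (.par Q R) ∧ Y = .par (.par P Q) R
  refine coinduct (fun X Y => Assoc X Y ∨ Assoc Y X) Or.symm ?_ (.inl ⟨P, Q, R, rfl, rfl⟩)
  have assoc {P Q R} : Assoc (.par P (.par Q R)) (.par (.par P Q) R) := ⟨P, Q, R, rfl, rfl⟩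
  rintro _ _ _ _ (⟨P, Q, R, rfl, rfl⟩ | ⟨P, Q, R, rfl, rfl⟩) hs
  · cases hs with
    | parL _ hs => exact ⟨_, .parL _ (.parL _ hs), .inl (.inl assoc)⟩
    | parR _ hs =>
      cases hs with
      | parL _ hs => exact ⟨_, .parL _ (.parR _ hs), .inl (.inl assoc)⟩
      | parR _ hs => exact ⟨_, .parR _ hs, .inl (.inl assoc)⟩
      | syn hs₁ hs₂ => exact ⟨_, .syn (.parR _ hs₁) hs₂, .inl (.inl assoc)⟩
    | syn hs₁ hs₂ =>
      cases hs₂ with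
      | parL _ hs₂ => exact ⟨_, .parL _ (.syn hs₁ hs₂), .inl (.inl assoc)⟩
      | parR _ hs₂ => exact ⟨_, .syn (.parL _ hs₁) hs₂, .inl (.inl assoc)⟩
  · cases hs with
    | parL _ hs =>
      cases hs with
      | parL _ hs => exact ⟨_, .parL _ hs, .inl (.inr assoc)⟩
      | parR _ hs => exact ⟨_, .parR _ (.parL _ hs), .inl (.inr assoc)⟩
      | syn hs₁ hs₂ => exact ⟨_, .syn hs₁ (.parL _ hs₂), .inl (.inr assoc)⟩
    | parR _ hs => exact ⟨_, .parR _ (.parR _ hs), .inl (.inr assoc)⟩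
    | syn hs₁ hs₂ =>
      cases hs₁ with
      | parL _ hs₁ => exact ⟨_, .syn hs₁ (.parR _ hs₂), .inl (.inr assoc)⟩
      | parR _ hs₁ => exact ⟨_, .parR _ (.syn hs₁ hs₂), .inl (.inr assoc)⟩

theorem par_nil (P : Proc) : Bisim (.par P .nil) P := by
  let Unit : Proc → Proc → Prop := fun X Y => ∃ P, X = .par P .nil ∧ Y = P
  refine coinduct (fun X Y => Unit X Y ∨ Unit Y X) Or.symm ?_ (.inl ⟨P, rfl, rfl⟩)
  rintro _ _ _ _ (⟨P, rfl, rfl⟩ | ⟨P, rfl, rfl⟩) hs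
  · cases hs with
    | parL _ hs => exact ⟨_, hs, .inl (.inl ⟨_, rfl, rfl⟩)⟩
    | parR _ hs => exact absurd hs Step.not_nil
    | syn _ hs => exact absurd hs Step.not_nil
  · exact ⟨_, .parL _ hs, .inl (.inr ⟨_, rfl, rfl⟩)⟩

theorem of_sc {P Q : Proc} (h : SC P Q) : Bisim P Q := by
  induction h with
  | refl => exact Bisim.refl _
  | symm _ ih => exact ih.symm
  | trans _ _ ih₁ ih₂ => exact ih₁.trans ih₂
  | comm => exact par_comm _ _
  | assoc => exact par_assoc _ _ _
  | unit => exact par_nil _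
  | pre η _ ih => exact ih.pre η
  | par _ _ ih₁ ih₂ => exact ih₁.par ih₂

theorem pow_redex (η : Act) (P : Proc) (k : ℕ) :
    Bisim (.pre η (.par P (pow (.pre η P) k))) (pow (.pre η P) (k + 1)) := by
  let Redex : Proc → Proc → Prop := fun X Y =>
    X = .pre η (.par P (pow (.pre η P) k)) ∧ Y = pow (.pre η P) (k + 1)
  refine coinduct (fun X Y => Redex X Y ∨ Redex Y X) Or.symm ?_ (.inl ⟨rfl, rfl⟩)
  rintro _ _ _ _ (⟨rfl, rfl⟩ | ⟨rfl, rfl⟩) hs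
  · obtain ⟨rfl, rfl⟩ := hs.pre_inv
    exact ⟨_, .parL _ (.pre η P), .inr (Bisim.refl _)⟩
  · obtain ⟨rfl, i, hi, hT⟩ := hs.of_pow
    obtain rfl : k = i := by omega
    exact ⟨_, .pre η _, .inr (of_sc hT)⟩

end Bisim

instance Proc.instSetoid : Setoid Proc := ⟨SC, ⟨SC.refl, SC.symm, SC.trans⟩⟩

abbrev ProcSC := Quotient Proc.instSetoid

noncomputable instance : DecidableEq ProcSC := Classical.decEq _

def ProcSC.size : ProcSC → ℕ := Quotient.lift Proc.size fun _ _ => SC.size_eq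

@[simp] theorem ProcSC.size_mk (P : Proc) : ProcSC.size ⟦P⟧ = P.size := rfl

def Proc.comps : Proc → Multiset ProcSC
  | .nil => 0
  | .pre a P => {⟦Proc.pre a P⟧}
  | .par P Q => P.comps + Q.comps

theorem Proc.comps_pow (a : Act) (D : Proc) (k : ℕ) :
    (pow (.pre a D) k).comps = Multiset.replicate k ⟦Proc.pre a D⟧ := by
  induction k with
  | zero => rfl
  | succ k ih => simp only [pow, Proc.comps, ih, Multiset.replicate_succ, Multiset.singleton_add]

theorem SC.comps_eq {P Q : Proc} (h : SC P Q) : P.comps = Q.comps := by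
  induction h with
  | refl => rfl
  | symm _ ih => exact ih.symm
  | trans _ _ ih₁ ih₂ => exact ih₁.trans ih₂
  | comm => exact add_comm _ _
  | assoc => exact (add_assoc _ _ _).symm
  | unit => exact add_zero _
  | pre η h => exact congrArg ({·}) (Quotient.sound (s := Proc.instSetoid) (SC.pre η h))
  | par _ _ ih₁ ih₂ => exact congrArg₂ (· + ·) ih₁ ih₂

theorem SC.comps_eq_cons {P R C : Proc} {a : Act} (h : SC P (.par (.pre a C) R)) :
    P.comps = ⟦Proc.pre a C⟧ ::ₘ R.comps :=
  h.comps_eq.trans (Multiset.singleton_add _ _)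

theorem SC.mem_comps {P R C : Proc} {a : Act} (h : SC P (.par (.pre a C) R)) :
    ⟦Proc.pre a C⟧ ∈ P.comps :=
  h.comps_eq_cons ▸ Multiset.mem_cons_self _ _

theorem Proc.exists_sc_par_of_mem_comps {x : ProcSC} :
    ∀ {P : Proc}, x ∈ P.comps → ∃ a C R, x = ⟦Proc.pre a C⟧ ∧ SC P (.par (.pre a C) R)
  | .nil, h => absurd h (Multiset.notMem_zero x)
  | .pre a C, h => ⟨a, C, .nil, Multiset.mem_singleton.mp h, (SC.unit _).symm⟩
  | .par P Q, h => by
    rcases Multiset.mem_add.mp h with h | h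
    · obtain ⟨a, C, R, rfl, hP⟩ := exists_sc_par_of_mem_comps h
      exact ⟨a, C, .par R Q, rfl, (hP.par (.refl Q)).trans (SC.assoc _ _ _).symm⟩
    · obtain ⟨a, C, R, rfl, hQ⟩ := exists_sc_par_of_mem_comps h
      exact ⟨a, C, .par P R, rfl, ((SC.refl P).par hQ).trans (SC.par_left_comm _ _ _)⟩

theorem Proc.size_le_of_mem_comps {P : Proc} {x : ProcSC} (h : x ∈ P.comps) :
    x.size ≤ P.size := by
  obtain ⟨a, C, R, rfl, hP⟩ := exists_sc_par_of_mem_comps h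
  simp only [hP.size_eq, ProcSC.size_mk, Proc.size]
  omega

theorem Proc.count_comps_eq_zero {P : Proc} {κ : ProcSC} (h : P.size < κ.size) :
    P.comps.count κ = 0 :=
  Multiset.count_eq_zero.mpr fun hκ => (size_le_of_mem_comps hκ).not_gt h

theorem sc_nil_of_comps_eq_zero : ∀ {P : Proc}, P.comps = 0 → SC P .nil
  | .nil, _ => .refl _
  | .pre _ _, h => absurd h (Multiset.singleton_ne_zero _)
  | .par _ _, h => by
    obtain ⟨hP, hQ⟩ := add_eq_zero.mp h
    exact ((sc_nil_of_comps_eq_zero hP).par (sc_nil_of_comps_eq_zero hQ)).trans (.unit _)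

theorem sc_of_comps_eq {P Q : Proc} (h : P.comps = Q.comps) : SC P Q := by
  suffices ∀ s : Multiset ProcSC, ∀ P Q : Proc, P.comps = s → Q.comps = s → SC P Q from
    this _ P Q h rfl
  intro s
  induction s using Multiset.induction_on with
  | empty => exact fun P Q hP hQ =>
      (sc_nil_of_comps_eq_zero hP).trans (sc_nil_of_comps_eq_zero hQ).symm
  | cons x s ih =>
    intro P Q hP hQ
    obtain ⟨a, C, R, rfl, hPR⟩ := Proc.exists_sc_par_of_mem_comps (hP ▸ Multiset.mem_cons_self _ _)
    obtain ⟨b, D, Y, hx, hQY⟩ := Proc.exists_sc_par_of_mem_comps (hQ ▸ Multiset.mem_cons_self _ _)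
    have hR : R.comps = s := (Multiset.cons_inj_right _).mp (hPR.comps_eq_cons.symm.trans hP)
    have hY : Y.comps = s := (Multiset.cons_inj_right _).mp (hx ▸ hQY.comps_eq_cons.symm.trans hQ)
    exact hPR.trans (((Quotient.exact hx).par (ih R Y hR hY)).trans hQY.symm)

theorem Proc.exists_sc_pre_of_card_comps_eq_one {P : Proc} (h : P.comps.card = 1) :
    ∃ a C, SC P (.pre a C) := by
  obtain ⟨x, hx⟩ := Multiset.card_eq_one.mp h
  obtain ⟨a, C, -, rfl, -⟩ := exists_sc_par_of_mem_comps (hx ▸ Multiset.mem_singleton_self x)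
  exact ⟨a, C, sc_of_comps_eq hx⟩

theorem count_comps_of_match {A B C D R Y : Proc} {a : Act} {κ : ProcSC}
    (hA : SC A (.par (.pre a C) R)) (hB : SC B (.par (.pre a D) Y))
    (h : C.comps + R.comps = D.comps + Y.comps) (hC : C.size < κ.size) (hD : D.size < κ.size) :
    A.comps.count κ + (if κ = ⟦Proc.pre a D⟧ then 1 else 0) =
      B.comps.count κ + (if κ = ⟦Proc.pre a C⟧ then 1 else 0) := by
  have hRY : R.comps.count κ = Y.comps.count κ := by
    simpa only [Multiset.count_add, Proc.count_comps_eq_zero hC, Proc.count_comps_eq_zero hD,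
      zero_add] using congrArg (Multiset.count κ) h
  rw [hA.comps_eq_cons, hB.comps_eq_cons, Multiset.count_cons, Multiset.count_cons, hRY]
  omega

-- `NF` is defined by rewriting modulo `≡`; this structural form makes it compositional.
def NoRedex : Proc → Prop
  | .nil => True
  | .pre η P => NoRedex P ∧ ¬ ∃ C k, 1 ≤ k ∧ SC P (.par C (pow (.pre η C) k))
  | .par P Q => NoRedex P ∧ NoRedex Q

theorem SC.noRedex_iff {P Q : Proc} (h : SC P Q) : NoRedex P ↔ NoRedex Q := by
  induction h with
  | refl => rfl
  | symm _ ih => exact ih.symm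
  | trans _ _ ih₁ ih₂ => exact ih₁.trans ih₂
  | comm => exact and_comm
  | assoc => exact and_assoc.symm
  | unit => exact (and_true _).to_iff
  | pre η h ih =>
    refine and_congr ih (not_congr ⟨?_, ?_⟩) <;> rintro ⟨C, k, hk, hC⟩
    exacts [⟨C, k, hk, h.symm.trans hC⟩, ⟨C, k, hk, h.trans hC⟩]
  | par _ _ ih₁ ih₂ => exact and_congr ih₁ ih₂

theorem RW.not_noRedex {P P' : Proc} (h : RW P P') : ¬ NoRedex P := by
  induction h with
  | head hk => exact fun h => h.2 ⟨_, _, hk, .refl _⟩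
  | pre _ _ ih => exact fun h => ih h.1
  | parL _ _ ih => exact fun h => ih h.1
  | parR _ _ ih => exact fun h => ih h.2
  | congr h _ _ ih => exact fun hP => ih ((h.noRedex_iff).mp hP)

theorem exists_rw_of_not_noRedex : ∀ {P : Proc}, ¬ NoRedex P → ∃ P', RW P P'
  | .nil, h => absurd trivial h
  | .pre η P, h => by
    by_cases hP : NoRedex P
    · obtain ⟨C, k, hk, hC⟩ : ∃ C k, 1 ≤ k ∧ SC P (.par C (pow (.pre η C) k)) :=
        by_contra fun hne => h ⟨hP, hne⟩
      exact ⟨_, .congr (.pre η hC) (.head hk) (.refl _)⟩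
    · obtain ⟨P', hP'⟩ := exists_rw_of_not_noRedex hP
      exact ⟨_, .pre η hP'⟩
  | .par P Q, h => by
    by_cases hP : NoRedex P
    · obtain ⟨Q', hQ'⟩ := exists_rw_of_not_noRedex fun hQ => h ⟨hP, hQ⟩
      exact ⟨_, .parR P hQ'⟩
    · obtain ⟨P', hP'⟩ := exists_rw_of_not_noRedex hP
      exact ⟨_, .parL Q hP'⟩

theorem nf_iff_noRedex {P : Proc} : NF P ↔ NoRedex P :=
  ⟨fun h => by_contra fun hP => h (exists_rw_of_not_noRedex hP),
    fun hP ⟨_, h⟩ => h.not_noRedex hP⟩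

theorem nf_par_iff {P Q : Proc} : NF (.par P Q) ↔ NF P ∧ NF Q := by
  simp only [nf_iff_noRedex, NoRedex]

theorem NF.of_pre {a : Act} {P : Proc} (h : NF (.pre a P)) : NF P :=
  fun ⟨_, hP⟩ => h ⟨_, .pre a hP⟩

theorem NF.of_sc {P Q : Proc} (hP : NF P) (h : SC P Q) : NF Q :=
  fun ⟨_, hQ⟩ => hP ⟨_, .congr h hQ (.refl _)⟩

theorem NF.of_sc_par {P C R : Proc} {a : Act} (hP : NF P) (h : SC P (.par (.pre a C) R)) :
    NF C ∧ NF R :=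
  let ⟨hC, hR⟩ := nf_par_iff.mp (hP.of_sc h)
  ⟨hC.of_pre, hR⟩

theorem NF.of_step {P P' : Proc} {a : Act} (hP : NF P) (hs : Step P (.act a) P') : NF P' := by
  obtain ⟨D, Y, h, h'⟩ := hs.decompose
  exact (nf_par_iff.mpr (hP.of_sc_par h)).of_sc h'.symm

-- The distribution law preserves `Proc.size`, but strictly decreases this weight.
def Proc.weight : Proc → ℕ
  | .nil => 0
  | .pre _ P => 2 * P.weight + 1
  | .par P Q => P.weight + Q.weight

theorem SC.weight_eq {P Q : Proc} (h : SC P Q) : P.weight = Q.weight := by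
  induction h <;> (try simp only [Proc.weight] at *) <;> omega

theorem Proc.weight_pow (P : Proc) (k : ℕ) : (pow P k).weight = k * P.weight := by
  induction k with
  | zero => simp [pow, weight]
  | succ k ih => simp only [pow, weight, ih]; ring

theorem RW.weight_lt {P P' : Proc} (h : RW P P') : P'.weight < P.weight := by
  induction h with
  | @head η P k hk =>
    simp only [Proc.weight, Proc.weight_pow]
    nlinarith
  | congr h₁ _ h₂ ih => rwa [h₁.weight_eq, ← h₂.weight_eq]
  | _ => simp only [Proc.weight]; omega

theorem RW.bisim {P P' : Proc} (h : RW P P') : Bisim P P' := by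
  induction h with
  | head => exact Bisim.pow_redex _ _ _
  | pre η _ ih => exact ih.pre η
  | parL Q _ ih => exact ih.par (Bisim.refl Q)
  | parR P _ ih => exact (Bisim.refl P).par ih
  | congr h₁ _ h₂ ih => exact ((Bisim.of_sc h₁).trans ih).trans (Bisim.of_sc h₂)

theorem exists_bisim_nf (P : Proc) : ∃ P₀, Bisim P P₀ ∧ NF P₀ := by
  induction P using (measure Proc.weight).wf.induction with
  | _ P ih =>
  by_cases hP : NF P
  · exact ⟨P, Bisim.refl P, hP⟩
  · obtain ⟨P', hP'⟩ := not_not.mp hP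
    obtain ⟨P₀, h, h₀⟩ := ih P' hP'.weight_lt
    exact ⟨P₀, hP'.bisim.trans h, h₀⟩

def SCOfBisimBelow (n : ℕ) : Prop :=
  ∀ A B : Proc, NF A → NF B → Bisim A B → A.size < n → SC A B

namespace SCOfBisimBelow

variable {n : ℕ} (ih : SCOfBisimBelow n) {A B C R : Proc} {a : Act}
include ih

theorem exists_step_sc (hA : NF A) (hB : NF B) (hAB : Bisim A B) (hn : A.size ≤ n)
    (hAR : SC A (.par (.pre a C) R)) : ∃ B', Step B (.act a) B' ∧ SC (.par C R) B' := by
  obtain ⟨B', hs, hB'⟩ := ((Bisim.of_sc hAR).symm.trans hAB).step (.parL R (.pre a C))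
  refine ⟨B', hs, ih _ _ (nf_par_iff.mpr (hA.of_sc_par hAR)) (hB.of_step hs) hB' ?_⟩
  have := hAR.size_eq
  simp only [Proc.size] at this ⊢
  omega

theorem exists_match (hA : NF A) (hB : NF B) (hAB : Bisim A B) (hn : A.size ≤ n)
    (hAR : SC A (.par (.pre a C) R)) :
    ∃ D Y, SC B (.par (.pre a D) Y) ∧ C.comps + R.comps = D.comps + Y.comps := by
  obtain ⟨B', hs, h⟩ := ih.exists_step_sc hA hB hAB hn hAR
  obtain ⟨D, Y, hBY, hB'⟩ := hs.decompose
  exact ⟨D, Y, hBY, (h.trans hB').comps_eq⟩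

theorem sc_of_match {D Y : Proc} (hA : NF A) (hB : NF B) (hn : A.size ≤ n)
    (hAR : SC A (.par (.pre a C) R)) (hBY : SC B (.par (.pre a D) Y))
    (h : C.comps + R.comps = D.comps + Y.comps) (hCD : SC (.pre a C) (.pre a D)) : SC A B := by
  have hCD : SC C D := ih C D (hA.of_sc_par hAR).1 (hB.of_sc_par hBY).1
    (Bisim.of_sc hCD).pre_inv.2 (by have := hAR.size_eq; simp only [Proc.size] at this; omega)
  have hRY : SC R Y := sc_of_comps_eq (add_left_cancel (hCD.comps_eq ▸ h))
  exact hAR.trans (((SC.pre a hCD).par hRY).trans hBY.symm)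

theorem exists_sc_par_of_bisim_pre {η : Act} {x : ProcSC} (hA : NF (.pre η A))
    (hn : (Proc.pre η A).size ≤ n) (hB : NF B) (hAB : Bisim (.pre η A) B) (hx : x ∈ B.comps) :
    ∃ C R, x = ⟦Proc.pre η C⟧ ∧ SC B (.par (.pre η C) R) ∧ C.comps + R.comps = A.comps := by
  obtain ⟨b, C, R, rfl, hBR⟩ := Proc.exists_sc_par_of_mem_comps hx
  obtain ⟨_, hs, h⟩ := ih.exists_step_sc hB hA hAB.symm (hAB.size_eq ▸ hn) hBR
  obtain ⟨⟨⟩, rfl⟩ := hs.pre_inv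
  exact ⟨C, R, rfl, hBR, h.comps_eq⟩

theorem card_comps_eq_one {η : Act} (hA : NF (.pre η A)) (hn : (Proc.pre η A).size ≤ n)
    (hB : NF B) (hAB : Bisim (.pre η A) B) : B.comps.card = 1 := by
  have hne : B.comps ≠ 0 := fun h => by
    have := hAB.size_eq.trans (sc_nil_of_comps_eq_zero h).size_eq
    simp only [Proc.size] at this
    omega
  obtain ⟨κ, hκ, hmax⟩ := Multiset.exists_max_image ProcSC.size hne
  obtain ⟨C, R, rfl, hBR, hCR⟩ := ih.exists_sc_par_of_bisim_pre hA hn hB hAB hκ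
  -- whichever component fires, `B` has one `κ` more than the residual `A`, so all are `κ`
  have hall : ∀ x ∈ B.comps, x = ⟦Proc.pre η C⟧ := by
    intro x hx
    by_contra hxκ
    obtain ⟨C', R', rfl, hBR', hCR'⟩ := ih.exists_sc_par_of_bisim_pre hA hn hB hAB hx
    have hC' : C'.size < ProcSC.size ⟦Proc.pre η C⟧ := by
      have := hmax _ hx; simp only [ProcSC.size_mk, Proc.size] at this ⊢; omega
    have hC : C.size < ProcSC.size ⟦Proc.pre η C⟧ := by simp [Proc.size]
    have h₁ := congrArg (Multiset.count ⟦Proc.pre η C⟧) (hCR.trans hCR'.symm)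
    rw [Multiset.count_add, Multiset.count_add, Proc.count_comps_eq_zero hC,
      Proc.count_comps_eq_zero hC'] at h₁
    have h₂ := congrArg (Multiset.count ⟦Proc.pre η C⟧) (hBR.comps_eq_cons.symm.trans
      hBR'.comps_eq_cons)
    rw [Multiset.count_cons_self, Multiset.count_cons_of_ne (Ne.symm hxκ)] at h₂
    omega
  by_contra h₁
  have hm : 2 ≤ B.comps.card := by
    have := Multiset.card_pos.mpr hne
    omega
  have hR : R.comps = Multiset.replicate (B.comps.card - 1) ⟦Proc.pre η C⟧ := by
    rw [hBR.comps_eq_cons, Multiset.card_cons, Nat.add_sub_cancel]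
    exact Multiset.eq_replicate_card.mpr fun x hx =>
      hall x (hBR.comps_eq_cons ▸ Multiset.mem_cons_of_mem hx)
  have hredex : SC A (.par C (pow (.pre η C) (B.comps.card - 1))) := by
    refine sc_of_comps_eq ?_
    rw [← hCR, hR, ← Proc.comps_pow]
    rfl
  exact hA ⟨_, .congr (.pre η hredex) (.head (by omega)) (.refl _)⟩

theorem sc_of_card_comps_eq_one (hA : NF A) (hB : NF B) (hAB : Bisim A B) (hn : A.size ≤ n)
    (h₁ : A.comps.card = 1) : SC A B := by
  obtain ⟨a, C, hAC⟩ := Proc.exists_sc_pre_of_card_comps_eq_one h₁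
  have hC : NF (.pre a C) := hA.of_sc hAC
  have hCB : Bisim (.pre a C) B := (Bisim.of_sc hAC).symm.trans hAB
  obtain ⟨b, D, hBD⟩ := Proc.exists_sc_pre_of_card_comps_eq_one
    (ih.card_comps_eq_one hC (hAC.size_eq ▸ hn) hB hCB)
  obtain ⟨rfl, hCD⟩ := (hCB.trans (Bisim.of_sc hBD)).pre_inv
  have hCD : SC C D := ih C D hC.of_pre (hB.of_sc hBD).of_pre hCD
    (by have := hAC.size_eq; simp only [Proc.size] at this; omega)
  exact hAC.trans ((SC.pre a hCD).trans hBD.symm)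

theorem sc_of_max_mem {κ : ProcSC} (hA : NF A) (hB : NF B) (hAB : Bisim A B) (hn : A.size ≤ n)
    (hκ : κ ∈ A.comps) (hmax : ∀ x ∈ A.comps + B.comps, x.size ≤ κ.size)
    (h₂ : 2 ≤ A.comps.card) : SC A B := by
  have hBn : B.size ≤ n := hAB.size_eq ▸ hn
  have small : ∀ {b D}, ⟦Proc.pre b D⟧ ∈ A.comps + B.comps → D.size < κ.size := by
    intro b D h
    have := hmax _ h
    simp only [ProcSC.size_mk, Proc.size] at this
    omega
  obtain ⟨a, C, R, rfl, hAR⟩ := Proc.exists_sc_par_of_mem_comps hκ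
  obtain ⟨D, Y, hBY, h⟩ := ih.exists_match hA hB hAB hn hAR
  by_cases hCD : SC (.pre a C) (.pre a D)
  · exact ih.sc_of_match hA hB hn hAR hBY h hCD
  have hcount := count_comps_of_match hAR hBY h 
    (small (Multiset.mem_add.mpr (.inl hAR.mem_comps)))
    (small (Multiset.mem_add.mpr (.inr hBY.mem_comps)))
  rw [if_neg fun h => hCD (Quotient.exact h), if_pos rfl] at hcount
  by_cases hall : ∀ x ∈ A.comps, x = ⟦Proc.pre a C⟧
  · -- `A` is a power of `κ`, so `κ` also occurs in `B`; firing it there finds `κ` in `A`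
    have hκB : ⟦Proc.pre a C⟧ ∈ B.comps := by
      have := Multiset.count_eq_card.mpr fun x hx => (hall x hx).symm
      exact Multiset.count_pos.mp (by omega)
    obtain ⟨b, C', R', hκ', hBR'⟩ := Proc.exists_sc_par_of_mem_comps hκB
    obtain ⟨D', Y', hAY', h'⟩ := ih.exists_match hB hA hAB.symm hBn hBR'
    have hD' := hall _ hAY'.mem_comps
    exact (ih.sc_of_match hB hA hBn hBR' hAY' h' (Quotient.exact (hκ'.symm.trans hD'.symm))).symm
  · obtain ⟨x, hx, hxκ⟩ := not_forall₂.mp hall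
    obtain ⟨b, E, R', rfl, hAR'⟩ := Proc.exists_sc_par_of_mem_comps hx
    obtain ⟨F, Y', hBY', h'⟩ := ih.exists_match hA hB hAB hn hAR'
    have := count_comps_of_match hAR' hBY' h' 
      (small (Multiset.mem_add.mpr (.inl hAR'.mem_comps)))
      (small (Multiset.mem_add.mpr (.inr hBY'.mem_comps)))
    rw [if_neg (Ne.symm hxκ)] at this
    split_ifs at this <;> omega

theorem succ : SCOfBisimBelow (n + 1) := by
  intro A B hA hB hAB hn
  rw [Nat.lt_succ_iff] at hn
  rcases eq_or_ne (A.comps + B.comps) 0 with h₀ | hne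
  · obtain ⟨hA₀, hB₀⟩ := add_eq_zero.mp h₀
    exact sc_of_comps_eq (hA₀.trans hB₀.symm)
  obtain ⟨κ, hκ, hmax⟩ := Multiset.exists_max_image ProcSC.size hne
  wlog hκA : κ ∈ A.comps generalizing A B
  · rw [add_comm] at hne hκ hmax
    have hκB : κ ∈ B.comps := (Multiset.mem_add.mp hκ).resolve_right hκA
    exact (this B A hB hA hAB.symm (hAB.size_eq ▸ hn) hne hκ hmax hκB).symm
  rcases Nat.lt_or_ge 1 A.comps.card with h₂ | h₁
  · exact ih.sc_of_max_mem hA hB hAB hn hκA hmax h₂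
  · exact ih.sc_of_card_comps_eq_one hA hB hAB hn
      (le_antisymm h₁ (Multiset.card_pos_iff_exists_mem.mpr ⟨κ, hκA⟩))

end SCOfBisimBelow

theorem scOfBisimBelow (n : ℕ) : SCOfBisimBelow n := by
  induction n with
  | zero => exact fun _ _ _ _ _ h => absurd h (Nat.not_lt_zero _)
  | succ n ih => exact ih.succ

theorem sc_of_bisim {A B : Proc} (hA : NF A) (hB : NF B) (h : Bisim A B) : SC A B :=
  scOfBisimBelow _ A B hA hB h (Nat.lt_succ_self _)

theorem card_comps_eq_one_of_bisim_pre {η : Act} {A B : Proc} (hA : NF (.pre η A)) (hB : NF B)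
    (h : Bisim (.pre η A) B) : B.comps.card = 1 :=
  (scOfBisimBelow _).card_comps_eq_one hA le_rfl hB h

/-- bisimilar normal forms are structurally congruent, and
    every prefixed normal form is prime. -/
theorem nf_bisim_iff_sc :
    (∀ A B : Proc, NF A → NF B → Bisim A B → SC A B) ∧
    (∀ (η : Act) (A : Proc), NF (.pre η A) → IsPrime (.pre η A)) := by
  refine ⟨fun A B => sc_of_bisim, fun η A hA => ⟨fun h => ?_, fun Q R h => ?_⟩⟩
  · obtain ⟨_, hs, -⟩ := h.step (.pre η A)
    exact Step.not_nil hs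
  · obtain ⟨Q₀, hQ, hQ₀⟩ := exists_bisim_nf Q
    obtain ⟨R₀, hR, hR₀⟩ := exists_bisim_nf R
    have h₁ := card_comps_eq_one_of_bisim_pre hA (nf_par_iff.mpr ⟨hQ₀, hR₀⟩) (h.trans (hQ.par hR))
    have bisim_nil {P P₀ : Proc} (h : Bisim P P₀) (h₀ : P₀.comps.card = 0) : Bisim P .nil :=
      h.trans (Bisim.of_sc (sc_nil_of_comps_eq_zero (Multiset.card_eq_zero.mp h₀)))
    rw [Proc.comps, Multiset.card_add] at h₁
    rcases Nat.eq_zero_or_pos Q₀.comps.card with hQ₁ | hQ₁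
    · exact .inl (bisim_nil hQ hQ₁)
    · exact .inr (bisim_nil hR (by omega))
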